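/- arXiv:2505.20554 — 6 statements merged into one kernel-verified Lean document; each statement's English description precedes it below -/
import Mathlib

section
/- Fix p_I > 0, λ > 0, T > 0, and n ∈ {1,…,5}, and set k = 6 − n. With A(n) = p_I·(n + g(6−n; λT)/2), B(n) = n/λ + 2T, and N(n) = A(n+1)·B(n) − A(n)·B(n+1), one has the closed form N(n) = p_I·( 2T − (T + n/(2λ))·(g(k;λT) − g(k−1;λT)) − g(k;λT)/(2λ) ). -/
open Real

/-- Truncated Poisson mean: `g(k;μ) = ∑_{m=0}^∞ min(m,k) · e^{−μ} μ^m / m!`. -/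
noncomputable def truncMean (k : ℕ) (μ : ℝ) : ℝ :=
  ∑' m : ℕ, (min m k : ℝ) * (Real.exp (-μ) * μ ^ m / (m.factorial : ℝ))

/-- **Equation (7) (Step 1 of Theorem 1).** With `A(n) = p_I (n + g(6−n;λT)/2)`,
`B(n) = n/λ + 2T`, and `N(n) = A(n+1) B(n) − A(n) B(n+1)`, one has the closed form
`N(n) = p_I ( 2T − (T + n/(2λ)) (g(k;λT) − g(k−1;λT)) − g(k;λT)/(2λ) )` with `k = 6 − n`. -/
theorem increment_numerator_closed_form
    (p_I lam T : ℝ) (hp : 0 < p_I) (hlam : 0 < lam) (hT : 0 < T)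
    (n : ℕ) (hn1 : 1 ≤ n) (hn5 : n ≤ 5) (k : ℕ) (hk : k = 6 - n)
    (A B : ℕ → ℝ)
    (hA : ∀ m, A m = p_I * ((m : ℝ) + truncMean (6 - m) (lam * T) / 2))
    (hB : ∀ m, B m = (m : ℝ) / lam + 2 * T) :
    A (n + 1) * B n - A n * B (n + 1)
      = p_I * (2 * T
          - (T + (n : ℝ) / (2 * lam)) * (truncMean k (lam * T) - truncMean (k - 1) (lam * T))
          - truncMean k (lam * T) / (2 * lam)) := by
  have e1 : 6 - (n + 1) = k - 1 := by omega
  have e2 : 6 - n = k := by omega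
  rw [hA, hA, hB, hB, e1, e2]
  push_cast
  field_simp
  ring
end

section
/- Fix p_I > 0, λ > 0, T > 0, C ∈ ℝ, and n ∈ {1,…,5}, and set k = 6 − n, Δg = g(k;λT) − g(k−1;λT). Then the profit increment Δπ(n;λ,T) = π(n+1) − π(n) satisfies: Δπ(n;λ,T) < 0 if and only if λ·(4T − 2T·Δg) < n·Δg + g(k;λT); equivalently, writing λₙ† = (n·Δg + g(k;λT))/(4T − 2T·Δg) (which is well defined and strictly positive since 0 < Δg < 1), Δπ(n;λ,T) < 0 iff λ < λₙ†. -/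
/-!
Clearing the positive denominators `B(n)`, `B(n+1)` turns the sign of `Δπ(n)` into the sign of an
expression that is affine in `λ`; this gives the first equivalence. For `X ~ Poisson(λT)` one has
`g(k) = 𝔼[min(X, k)]`, so `Δg = g(k) - g(k-1) = ℙ(X ≥ k)`, which lies strictly between `0` and `1`
when `λT > 0` and `k ≥ 1`. Hence `4T - 2TΔg > 0`, and with `g(k) > 0` the threshold `λₙ†` is positive.
-/

open Real

/-- Expected profit per unit time: `π(n;λ,T) = A(n)/B(n) − C` with
`A(n) = p_I (n + g(6−n;λT)/2)` and `B(n) = n/λ + 2T`. -/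
noncomputable def profit (p_I C lam T : ℝ) (n : ℕ) : ℝ :=
  p_I * ((n : ℝ) + truncMean (6 - n) (lam * T) / 2) / ((n : ℝ) / lam + 2 * T) - C

/-- Profit increment `Δπ(n;λ,T) = π(n+1;λ,T) − π(n;λ,T)`. -/
noncomputable def dProfit (p_I C lam T : ℝ) (n : ℕ) : ℝ :=
  profit p_I C lam T (n + 1) - profit p_I C lam T n

noncomputable def poissonWeight (μ : ℝ) (m : ℕ) : ℝ :=
  exp (-μ) * μ ^ m / m.factorial

lemma hasSum_poissonWeight (μ : ℝ) : HasSum (poissonWeight μ) 1 := by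
  have h := (NormedSpace.expSeries_div_hasSum_exp μ).mul_left (exp (-μ))
  rw [← exp_eq_exp_ℝ, ← exp_add, neg_add_cancel, exp_zero] at h
  show HasSum (fun m => exp (-μ) * μ ^ m / m.factorial) 1
  simpa only [mul_div_assoc] using h

lemma poissonWeight_pos {μ : ℝ} (hμ : 0 < μ) (m : ℕ) : 0 < poissonWeight μ m := by
  unfold poissonWeight
  positivity

lemma summable_poissonWeight_nat_add (μ : ℝ) (j : ℕ) :
    Summable fun m => poissonWeight μ (m + j) :=
  (summable_nat_add_iff j).2 (hasSum_poissonWeight μ).summable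

lemma truncMean_eq_tsum (k : ℕ) (μ : ℝ) :
    truncMean k μ = ∑' m : ℕ, min (m : ℝ) k * poissonWeight μ m :=
  rfl

lemma summable_min_mul_poissonWeight (k : ℕ) (μ : ℝ) :
    Summable fun m : ℕ => min (m : ℝ) k * poissonWeight μ m := by
  rw [← summable_nat_add_iff k]
  refine ((summable_poissonWeight_nat_add μ k).mul_left (k : ℝ)).congr fun m => ?_
  rw [min_eq_right (by exact_mod_cast Nat.le_add_left k m)]

lemma truncMean_succ_sub_truncMean (k : ℕ) (μ : ℝ) :
    truncMean (k + 1) μ - truncMean k μ = ∑' m : ℕ, poissonWeight μ (m + (k + 1)) := by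
  set f : ℕ → ℝ := fun m =>
    min (m : ℝ) (k + 1 : ℕ) * poissonWeight μ m - min (m : ℝ) k * poissonWeight μ m
  have hf : Summable f :=
    (summable_min_mul_poissonWeight (k + 1) μ).sub (summable_min_mul_poissonWeight k μ)
  have head : ∀ m ∈ Finset.range (k + 1), f m = 0 := fun m hm => by
    have hmk : (m : ℝ) ≤ k := by exact_mod_cast Finset.mem_range_succ_iff.1 hm
    have hmk' : (m : ℝ) ≤ (k + 1 : ℕ) := by push_cast; linarith
    simp only [f, min_eq_left hmk, min_eq_left hmk', sub_self]
  have tail : ∀ m : ℕ, f (m + (k + 1)) = poissonWeight μ (m + (k + 1)) := fun m => by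
    have hmk : ((k + 1 : ℕ) : ℝ) ≤ (m + (k + 1) : ℕ) := by exact_mod_cast Nat.le_add_left _ _
    have hmk' : (k : ℝ) ≤ (m + (k + 1) : ℕ) := by push_cast at hmk ⊢; linarith
    simp only [f, min_eq_right hmk, min_eq_right hmk']
    push_cast
    ring
  rw [truncMean_eq_tsum, truncMean_eq_tsum, ← (summable_min_mul_poissonWeight (k + 1) μ).tsum_sub
    (summable_min_mul_poissonWeight k μ)]
  change ∑' m, f m = _
  rw [← hf.sum_add_tsum_nat_add (k + 1), Finset.sum_eq_zero head, zero_add]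
  exact tsum_congr tail

lemma tsum_poissonWeight_nat_add_pos {μ : ℝ} (hμ : 0 < μ) (j : ℕ) :
    0 < ∑' m : ℕ, poissonWeight μ (m + j) :=
  (summable_poissonWeight_nat_add μ j).tsum_pos (fun _ => (poissonWeight_pos hμ _).le) 0
    (poissonWeight_pos hμ _)

lemma tsum_poissonWeight_nat_add_lt_one {μ : ℝ} (hμ : 0 < μ) {j : ℕ} (hj : j ≠ 0) :
    ∑' m : ℕ, poissonWeight μ (m + j) < 1 := by
  have hsplit := (hasSum_poissonWeight μ).summable.sum_add_tsum_nat_add j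
  rw [(hasSum_poissonWeight μ).tsum_eq] at hsplit
  have head_pos : 0 < ∑ i ∈ Finset.range j, poissonWeight μ i :=
    Finset.sum_pos (fun i _ => poissonWeight_pos hμ i) (Finset.nonempty_range_iff.2 hj)
  linarith

lemma truncMean_pos {k : ℕ} (hk : k ≠ 0) {μ : ℝ} (hμ : 0 < μ) : 0 < truncMean k μ := by
  rw [truncMean_eq_tsum]
  refine (summable_min_mul_poissonWeight k μ).tsum_pos (fun m => ?_) k ?_
  · exact mul_nonneg (le_min m.cast_nonneg k.cast_nonneg) (poissonWeight_pos hμ m).le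
  · rw [min_self]
    exact mul_pos (Nat.cast_pos.2 (Nat.pos_of_ne_zero hk)) (poissonWeight_pos hμ k)

lemma ratio_increment_neg_iff {p lam T x g g' : ℝ} (hp : 0 < p) (hlam : 0 < lam) (hT : 0 < T)
    (hx : 0 ≤ x) :
    p * (x + 1 + g' / 2) / ((x + 1) / lam + 2 * T) - p * (x + g / 2) / (x / lam + 2 * T) < 0 ↔
      lam * (4 * T - 2 * T * (g - g')) < x * (g - g') + g := by
  have hB₀ : 0 < x / lam + 2 * T := by positivity
  have hB₁ : 0 < (x + 1) / lam + 2 * T := by positivity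
  have key : (x + g / 2) * ((x + 1) / lam + 2 * T) - (x + 1 + g' / 2) * (x / lam + 2 * T)
      = (x * (g - g') + g - lam * (4 * T - 2 * T * (g - g'))) / (2 * lam) := by
    field_simp
    ring
  rw [sub_neg, div_lt_div_iff₀ hB₁ hB₀, mul_assoc, mul_assoc, mul_lt_mul_iff_right₀ hp,
    ← sub_pos, key, div_pos_iff_of_pos_right (by positivity), sub_pos]

theorem increment_sign_condition_general
    (p_I lam T C : ℝ) (hp : 0 < p_I) (hlam : 0 < lam) (hT : 0 < T)
    (n : ℕ) (hn5 : n ≤ 5) (k : ℕ) (hk : k = 6 - n)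
    (Δg : ℝ) (hΔg : Δg = truncMean k (lam * T) - truncMean (k - 1) (lam * T))
    (lamDagger : ℝ)
    (hld : lamDagger = ((n : ℝ) * Δg + truncMean k (lam * T)) / (4 * T - 2 * T * Δg)) :
    (dProfit p_I C lam T n < 0 ↔
      lam * (4 * T - 2 * T * Δg) < (n : ℝ) * Δg + truncMean k (lam * T)) ∧
    0 < lamDagger ∧
    (dProfit p_I C lam T n < 0 ↔ lam < lamDagger) := by
  have hμ : 0 < lam * T := mul_pos hlam hT
  obtain ⟨j, rfl⟩ : ∃ j, k = j + 1 := ⟨5 - n, by omega⟩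
  have hn : 6 - (n + 1) = j := by omega
  rw [Nat.add_sub_cancel, truncMean_succ_sub_truncMean] at hΔg
  have hΔg_pos : 0 < Δg := hΔg ▸ tsum_poissonWeight_nat_add_pos hμ _
  have hΔg_lt_one : Δg < 1 := hΔg ▸ tsum_poissonWeight_nat_add_lt_one hμ j.succ_ne_zero
  have hsign : dProfit p_I C lam T n < 0 ↔
      lam * (4 * T - 2 * T * Δg) < (n : ℝ) * Δg + truncMean (j + 1) (lam * T) := by
    rw [hΔg, ← truncMean_succ_sub_truncMean, dProfit, profit, profit, sub_sub_sub_cancel_right,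
      ← hk, hn, Nat.cast_succ]
    exact ratio_increment_neg_iff hp hlam hT n.cast_nonneg
  have hden : 0 < 4 * T - 2 * T * Δg := by nlinarith
  have hnum : 0 < (n : ℝ) * Δg + truncMean (j + 1) (lam * T) := by
    have := truncMean_pos j.succ_ne_zero hμ
    positivity
  refine ⟨hsign, hld ▸ div_pos hnum hden, ?_⟩
  rw [hsign, hld, lt_div_iff₀ hden]

/-- **Sign condition (Equations 10–11, Proposition 1 / Theorem 1).**
With `k = 6 − n` and `Δg = g(k;λT) − g(k−1;λT)`:
`Δπ(n;λ,T) < 0 ↔ λ (4T − 2T Δg) < n Δg + g(k;λT)`; equivalently, writing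
`λₙ† = (n Δg + g(k;λT)) / (4T − 2T Δg)` (well defined and strictly positive),
`Δπ(n;λ,T) < 0 ↔ λ < λₙ†`. -/
theorem increment_sign_condition
    (p_I lam T C : ℝ) (hp : 0 < p_I) (hlam : 0 < lam) (hT : 0 < T)
    (n : ℕ) (hn1 : 1 ≤ n) (hn5 : n ≤ 5) (k : ℕ) (hk : k = 6 - n)
    (Δg : ℝ) (hΔg : Δg = truncMean k (lam * T) - truncMean (k - 1) (lam * T))
    (lamDagger : ℝ)
    (hld : lamDagger = ((n : ℝ) * Δg + truncMean k (lam * T)) / (4 * T - 2 * T * Δg)) :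
    (dProfit p_I C lam T n < 0 ↔
      lam * (4 * T - 2 * T * Δg) < (n : ℝ) * Δg + truncMean k (lam * T)) ∧
    0 < lamDagger ∧
    (dProfit p_I C lam T n < 0 ↔ lam < lamDagger) :=
  increment_sign_condition_general p_I lam T C hp hlam hT n hn5 k hk Δg hΔg lamDagger hld
end

section
/- For every n ∈ {1,2,3,4}, setting k = 6 − n, and for every μ with 0 < μ ≤ 1/2: 2 − ∑_{m=k}^∞ exp(−μ)·μ^m/m! > (μ + n/2)·exp(−μ)·μ^{k−1}/(k−1)! + (1/2)·∑_{m=0}^{k−1} exp(−μ)·μ^m/m!. -/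
open Real

/-- Poisson upper tail: `∑_{m=k}^∞ e^{−μ} μ^m / m!` (indexed as `m = j + k`). -/
noncomputable def poissonTail (k : ℕ) (μ : ℝ) : ℝ :=
  ∑' j : ℕ, Real.exp (-μ) * μ ^ (j + k) / ((j + k).factorial : ℝ)

lemma poissonTail_eq (k : ℕ) (μ : ℝ) :
    poissonTail k μ = 1 - ∑ m ∈ Finset.range k, Real.exp (-μ) * μ ^ m / (m.factorial : ℝ) := by
  have hs : Summable (fun m : ℕ => Real.exp (-μ) * μ ^ m / (m.factorial : ℝ)) := by
    simpa [mul_div_assoc] using (Real.summable_pow_div_factorial μ).mul_left (Real.exp (-μ))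
  have htot : ∑' m : ℕ, Real.exp (-μ) * μ ^ m / (m.factorial : ℝ) = 1 := by
    have h1 : ∑' m : ℕ, μ ^ m / (m.factorial : ℝ) = Real.exp μ := by
      rw [Real.exp_eq_exp_ℝ, NormedSpace.exp_eq_tsum_div]
    calc ∑' m : ℕ, Real.exp (-μ) * μ ^ m / (m.factorial : ℝ)
        = Real.exp (-μ) * ∑' m : ℕ, μ ^ m / (m.factorial : ℝ) := by
          rw [← tsum_mul_left]; simp [mul_div_assoc]
      _ = 1 := by rw [h1, ← Real.exp_add]; simp
  have := Summable.sum_add_tsum_nat_add (f := fun m : ℕ => Real.exp (-μ) * μ ^ m / (m.factorial : ℝ)) k hs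
  rw [htot] at this
  unfold poissonTail
  linarith

/-- **Lemma B.1, case n ≤ 4.** For every `n ∈ {1,2,3,4}` with `k = 6 − n` and every
`μ ∈ (0, 1/2]`, the monotonicity-in-`T` condition (B.1) holds:
`2 − P(M ≥ k) > (μ + n/2) P(M = k−1) + (1/2) P(M < k)`. -/
theorem condition_B1_small_mu (n : ℕ) (hn1 : 1 ≤ n) (hn4 : n ≤ 4) (k : ℕ) (hk : k = 6 - n)
    (μ : ℝ) (hμ : 0 < μ) (hμ' : μ ≤ 1 / 2) :
    2 - poissonTail k μ
      > (μ + (n : ℝ) / 2) * (Real.exp (-μ) * μ ^ (k - 1) / ((k - 1).factorial : ℝ))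
        + (1 / 2) * ∑ m ∈ Finset.range k, Real.exp (-μ) * μ ^ m / (m.factorial : ℝ) := by
  rw [poissonTail_eq]
  have he0 : 0 < Real.exp (-μ) := Real.exp_pos _
  have he1 : Real.exp (-μ) < 1 := Real.exp_lt_one_iff.mpr (by linarith)
  have hS : ∀ K : ℕ, Real.exp (-μ)
      ≤ ∑ m ∈ Finset.range (K + 1), Real.exp (-μ) * μ ^ m / (m.factorial : ℝ) := by
    intro K
    have : ∀ m ∈ Finset.range (K + 1), 0 ≤ Real.exp (-μ) * μ ^ m / (m.factorial : ℝ) := by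
      intro m _; positivity
    calc Real.exp (-μ) = Real.exp (-μ) * μ ^ 0 / ((0 : ℕ).factorial : ℝ) := by simp
      _ ≤ _ := Finset.single_le_sum this (Finset.mem_range.mpr (Nat.succ_pos K))
  interval_cases n <;> subst hk <;> norm_num [Nat.factorial]
  · -- n = 1, k = 5
    have h := hS 4
    norm_num at h
    nlinarith [pow_pos hμ 4, pow_le_pow_left₀ hμ.le hμ' 4, mul_pos he0 (pow_pos hμ 4)]
  · -- n = 2, k = 4
    have h := hS 3
    norm_num at h
    nlinarith [pow_pos hμ 3, pow_le_pow_left₀ hμ.le hμ' 3, mul_pos he0 (pow_pos hμ 3)]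
  · -- n = 3, k = 3
    have h := hS 2
    norm_num at h
    nlinarith [pow_pos hμ 2, pow_le_pow_left₀ hμ.le hμ' 2, mul_pos he0 (pow_pos hμ 2)]
  · -- n = 4, k = 2
    have h := hS 1
    norm_num at h
    nlinarith [mul_pos hμ hμ, mul_pos he0 hμ]
end

section
/- For every real b > 1/2 there exists a unique μ†(b) > 0 such that exp(μ†(b)) = 1 + μ†(b) + b·μ†(b)², and for every μ > 0, exp(μ) > 1 + μ + b·μ² holds if and only if μ > μ†(b). Moreover, for b = 2/3 (the case n = 2) the root satisfies 0.80 < μ†(2/3) < 0.81, and for b = 1 (the case n = 1) it satisfies 1.79 < μ†(1) < 1.80. -/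
/-!
Dividing by `μ²`, the inequality `exp μ > 1 + μ + b μ²` reads `b < q μ` with
`q μ = (exp μ - 1 - μ) / μ²` (`expQuot` below). The quotient `q` is strictly increasing on
`(0, ∞)`: `q' μ = ((μ - 2) exp μ + μ + 2) / μ³`, and the numerator vanishes at `0` with
derivative `1 - (1 - μ) exp μ > 0`. Since `q < 1/2 + μ` near `0` and `q ≥ 1/2 + μ/6`, it takes
every value `b > 1/2`, so the threshold is the unique solution of `q μ = b`. It is bracketed by
evaluating `q` at the endpoints with Taylor bounds on `exp`.
-/

open Real Set

noncomputable def expQuot (x : ℝ) : ℝ := (exp x - 1 - x) / x ^ 2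

section Reformulation

variable {b x : ℝ}

lemma expQuot_eq_iff (hx : 0 < x) : expQuot x = b ↔ exp x = 1 + x + b * x ^ 2 := by
  rw [expQuot, div_eq_iff (by positivity)]
  constructor <;> intro h <;> linarith

lemma expQuot_lt_iff (hx : 0 < x) : expQuot x < b ↔ exp x < 1 + x + b * x ^ 2 := by
  rw [expQuot, div_lt_iff₀ (by positivity)]
  constructor <;> intro h <;> linarith

lemma lt_expQuot_iff (hx : 0 < x) : b < expQuot x ↔ 1 + x + b * x ^ 2 < exp x := by
  rw [expQuot, lt_div_iff₀ (by positivity)]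
  constructor <;> intro h <;> linarith

end Reformulation

lemma one_sub_mul_exp_lt_one {x : ℝ} (hx : x ≠ 0) : (1 - x) * exp x < 1 := by
  have h := mul_lt_mul_of_pos_right (add_one_lt_exp (neg_ne_zero.2 hx)) (exp_pos x)
  rwa [← exp_add, neg_add_cancel, exp_zero, neg_add_eq_sub] at h

lemma sub_two_mul_exp_add_pos {x : ℝ} (hx : 0 < x) : 0 < (x - 2) * exp x + x + 2 := by
  let h : ℝ → ℝ := fun x => (x - 2) * exp x + x + 2
  have hderiv (x : ℝ) : HasDerivAt h (1 - (1 - x) * exp x) x := by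
    refine ((((hasDerivAt_id' x).sub_const 2).mul (hasDerivAt_exp x)).add
      (hasDerivAt_id' x)).add_const 2 |>.congr_deriv ?_
    ring
  have hmono : StrictMonoOn h (Ici 0) := by
    refine strictMonoOn_of_deriv_pos (convex_Ici 0)
      (fun y _ => (hderiv y).continuousAt.continuousWithinAt) fun y hy => ?_
    rw [interior_Ici] at hy
    rw [(hderiv y).deriv, sub_pos]
    exact one_sub_mul_exp_lt_one (ne_of_gt hy)
  simpa [h] using hmono self_mem_Ici hx.le hx

lemma hasDerivAt_expQuot {x : ℝ} (hx : x ≠ 0) :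
    HasDerivAt expQuot (((x - 2) * exp x + x + 2) / x ^ 3) x := by
  have hnum : HasDerivAt (fun x => exp x - 1 - x) (exp x - 1) x :=
    ((hasDerivAt_exp x).sub_const 1).sub (hasDerivAt_id x)
  refine (hnum.div (hasDerivAt_pow 2 x) (pow_ne_zero 2 hx)).congr_deriv ?_
  field_simp
  ring

lemma expQuot_strictMonoOn : StrictMonoOn expQuot (Ioi 0) := by
  refine strictMonoOn_of_deriv_pos (convex_Ioi 0)
    (fun x hx => (hasDerivAt_expQuot (ne_of_gt hx)).continuousAt.continuousWithinAt)
    fun x hx => ?_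
  rw [interior_Ioi] at hx
  rw [(hasDerivAt_expQuot (ne_of_gt hx)).deriv]
  exact div_pos (sub_two_mul_exp_add_pos hx) (pow_pos hx 3)

lemma expQuot_lt_one_half_add {x : ℝ} (hx₀ : 0 < x) (hx₁ : x ≤ 1) :
    expQuot x < 1 / 2 + x := by
  have h := exp_bound' hx₀.le hx₁ (n := 3) (by norm_num)
  norm_num [Finset.sum_range_succ, Nat.factorial] at h
  rw [expQuot_lt_iff hx₀]
  nlinarith [pow_pos hx₀ 3]

lemma one_half_add_div_six_le_expQuot {x : ℝ} (hx : 0 < x) : 1 / 2 + x / 6 ≤ expQuot x := by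
  have h := sum_le_exp_of_nonneg hx.le 4
  norm_num [Finset.sum_range_succ, Nat.factorial] at h
  rw [expQuot, le_div_iff₀ (by positivity)]
  nlinarith

lemma expQuot_surjOn : SurjOn expQuot (Ioi 0) (Ioi (1 / 2)) := by
  intro b hb
  rw [mem_Ioi] at hb
  set x₀ := min (b - 1 / 2) 1
  have hx₀ : 0 < x₀ := lt_min (by linarith) one_pos
  have hlow : expQuot x₀ ≤ b := by
    linarith [expQuot_lt_one_half_add hx₀ (min_le_right _ _), min_le_left (b - 1 / 2) 1]
  have hhigh : b ≤ expQuot (6 * b) := by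
    linarith [one_half_add_div_six_le_expQuot (show 0 < 6 * b by linarith)]
  have hcont : ContinuousOn expQuot (Icc x₀ (6 * b)) := fun x hx =>
    (hasDerivAt_expQuot (ne_of_gt (hx₀.trans_le hx.1))).continuousAt.continuousWithinAt
  obtain ⟨μ, hμ, hμb⟩ :=
    intermediate_value_Icc (by linarith [min_le_right (b - 1 / 2) 1]) hcont ⟨hlow, hhigh⟩
  exact ⟨μ, hx₀.trans_le hμ.1, hμb⟩

lemma root_mem_Ioo {a b c μ : ℝ} (ha : 0 < a) (hc : 0 < c) (hμ : 0 < μ)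
    (hroot : exp μ = 1 + μ + b * μ ^ 2) (hlow : exp a < 1 + a + b * a ^ 2)
    (hhigh : 1 + c + b * c ^ 2 < exp c) : μ ∈ Ioo a c := by
  rw [← expQuot_eq_iff hμ] at hroot
  rw [← expQuot_lt_iff ha, ← hroot] at hlow
  rw [← lt_expQuot_iff hc, ← hroot] at hhigh
  exact ⟨(expQuot_strictMonoOn.lt_iff_lt ha hμ).1 hlow,
    (expQuot_strictMonoOn.lt_iff_lt hμ hc).1 hhigh⟩

lemma exp_four_fifths_lt : exp (4 / 5) < 1 + 4 / 5 + 2 / 3 * (4 / 5) ^ 2 := by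
  have h := exp_bound' (x := 4 / 5) (by norm_num) (by norm_num) (n := 8) (by norm_num)
  norm_num [Finset.sum_range_succ, Nat.factorial] at h ⊢
  linarith

lemma lt_exp_eighty_one_hundredths : 1 + 81 / 100 + 2 / 3 * (81 / 100) ^ 2 < exp (81 / 100) := by
  have h := sum_le_exp_of_nonneg (x := 81 / 100) (by norm_num) 8
  norm_num [Finset.sum_range_succ, Nat.factorial] at h ⊢
  linarith

-- `exp_bound'` needs `x ≤ 1`, so `exp (179 / 100)` is bounded as the square of `exp (179 / 200)`.
lemma exp_one_hundred_seventy_nine_hundredths_lt :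
    exp (179 / 100) < 1 + 179 / 100 + 1 * (179 / 100) ^ 2 := by
  have h := exp_bound' (x := 179 / 200) (by norm_num) (by norm_num) (n := 8) (by norm_num)
  norm_num [Finset.sum_range_succ, Nat.factorial] at h
  have hsq : exp (179 / 100) = exp (179 / 200) ^ 2 := by rw [sq, ← exp_add]; norm_num
  rw [hsq]
  nlinarith [exp_pos (179 / 200)]

lemma lt_exp_nine_fifths : 1 + 9 / 5 + 1 * (9 / 5) ^ 2 < exp (9 / 5) := by
  have h := sum_le_exp_of_nonneg (x := 9 / 10) (by norm_num) 8
  norm_num [Finset.sum_range_succ, Nat.factorial] at h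
  have hsq : exp (9 / 5) = exp (9 / 10) ^ 2 := by rw [sq, ← exp_add]; norm_num
  rw [hsq]
  nlinarith

/-- **Lemma C.1, parts (ii)–(iii).** For every real `b > 1/2` there is a unique `μ†(b) > 0`
with `e^{μ†} = 1 + μ† + b μ†²`, and for every `μ > 0`, `e^μ > 1 + μ + b μ² ↔ μ > μ†(b)`.
Moreover for `b = 2/3` (case `n = 2`) the root lies in `(0.80, 0.81)`, and for `b = 1`
(case `n = 1`) it lies in `(1.79, 1.80)`. -/
theorem quadratic_threshold_roots :
    (∀ b : ℝ, 1 / 2 < b →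
      ∃ μd : ℝ, 0 < μd ∧ Real.exp μd = 1 + μd + b * μd ^ 2 ∧
        (∀ y : ℝ, 0 < y → Real.exp y = 1 + y + b * y ^ 2 → y = μd) ∧
        (∀ μ : ℝ, 0 < μ → (Real.exp μ > 1 + μ + b * μ ^ 2 ↔ μd < μ))) ∧
    (∀ μd : ℝ, 0 < μd → Real.exp μd = 1 + μd + (2 / 3) * μd ^ 2 →
      0.80 < μd ∧ μd < 0.81) ∧
    (∀ μd : ℝ, 0 < μd → Real.exp μd = 1 + μd + 1 * μd ^ 2 →
      1.79 < μd ∧ μd < 1.80) := by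
  refine ⟨fun b hb => ?_, fun μ hμ hroot => ?_, fun μ hμ hroot => ?_⟩
  · obtain ⟨μd, hμd, hq⟩ := expQuot_surjOn hb
    refine ⟨μd, hμd, (expQuot_eq_iff hμd).1 hq, fun y hy hroot => ?_, fun μ hμ => ?_⟩
    · exact expQuot_strictMonoOn.injOn hy hμd (((expQuot_eq_iff hy).2 hroot).trans hq.symm)
    · rw [gt_iff_lt, ← lt_expQuot_iff hμ, ← hq]
      exact expQuot_strictMonoOn.lt_iff_lt hμd hμ
  · norm_num
    exact root_mem_Ioo (by norm_num) (by norm_num) hμ hroot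
      exp_four_fifths_lt lt_exp_eighty_one_hundredths
  · norm_num
    exact root_mem_Ioo (by norm_num) (by norm_num) hμ hroot
      exp_one_hundred_seventy_nine_hundredths_lt lt_exp_nine_fifths
end

section
/- Let n, k be positive integers with n + k = 6 and let μ > 0. Then the inequality n·∑_{m=k}^∞ exp(−μ)·μ^m/m! + g(k;μ) > (2μ² + n·μ)·exp(−μ)·μ^{k−1}/(k−1)! + μ·∑_{j=0}^{k−1} exp(−μ)·μ^j/j! holds if and only if 6·exp(μ) > ∑_{j=0}^{k−2} (6 − j + μ)·μ^j/j! + ((n+1) + (n+1)·μ + 2μ²)·μ^{k−1}/(k−1)! (where the sum over j is empty when k = 1). -/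
open Real

lemma summable_pois (μ : ℝ) :
    Summable (fun m : ℕ => Real.exp (-μ) * μ ^ m / (m.factorial : ℝ)) := by
  simpa [mul_div_assoc] using (Real.summable_pow_div_factorial μ).mul_left (Real.exp (-μ))

lemma tsum_pois (μ : ℝ) :
    ∑' m : ℕ, Real.exp (-μ) * μ ^ m / (m.factorial : ℝ) = Real.exp (-μ) * Real.exp μ := by
  have h : ∑' m : ℕ, Real.exp (-μ) * μ ^ m / (m.factorial : ℝ)
      = Real.exp (-μ) * ∑' m : ℕ, μ ^ m / (m.factorial : ℝ) := by
    rw [← tsum_mul_left]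
    simp [mul_div_assoc]
  rw [h, Real.exp_eq_exp_ℝ, NormedSpace.exp_eq_tsum_div]

lemma tail_eq (k : ℕ) (μ : ℝ) :
    poissonTail k μ = Real.exp (-μ) * Real.exp μ
      - ∑ j ∈ Finset.range k, Real.exp (-μ) * μ ^ j / (j.factorial : ℝ) := by
  have h := Summable.sum_add_tsum_nat_add k (summable_pois μ)
  unfold poissonTail
  rw [tsum_pois] at h
  linarith [h]

lemma summable_trunc (k : ℕ) (μ : ℝ) (hμ : 0 < μ) :
    Summable (fun m : ℕ => (min m k : ℝ) * (Real.exp (-μ) * μ ^ m / (m.factorial : ℝ))) := by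
  apply Summable.of_nonneg_of_le (f := fun m : ℕ =>
      (k : ℝ) * (Real.exp (-μ) * μ ^ m / (m.factorial : ℝ)))
  · intro m
    have h0 : (0:ℝ) ≤ min (m:ℝ) (k:ℝ) := le_min (Nat.cast_nonneg m) (Nat.cast_nonneg k)
    positivity
  · intro m
    apply mul_le_mul_of_nonneg_right (min_le_right _ _)
    positivity
  · exact (summable_pois μ).mul_left _

lemma trunc_eq (k : ℕ) (μ : ℝ) (hμ : 0 < μ) :
    truncMean k μ = (∑ m ∈ Finset.range k, (m : ℝ) * (Real.exp (-μ) * μ ^ m / (m.factorial : ℝ)))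
      + (k : ℝ) * poissonTail k μ := by
  have h := Summable.sum_add_tsum_nat_add k (summable_trunc k μ hμ)
  have h2 : ∑' j : ℕ, min (((j + k : ℕ)) : ℝ) (k : ℝ) * (Real.exp (-μ) * μ ^ (j + k) / ((j + k).factorial : ℝ))
      = (k : ℝ) * poissonTail k μ := by
    unfold poissonTail
    rw [← tsum_mul_left]
    apply tsum_congr
    intro j
    have hjk : (((j + k : ℕ)) : ℝ) = (j : ℝ) + (k : ℝ) := by push_cast; ring
    rw [hjk, min_eq_right (le_add_of_nonneg_left (by positivity : (0:ℝ) ≤ (j : ℝ)))]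
  have h3 : ∑ m ∈ Finset.range k, min ((m:ℕ) : ℝ) (k : ℝ) * (Real.exp (-μ) * μ ^ m / (m.factorial : ℝ))
      = ∑ m ∈ Finset.range k, (m : ℝ) * (Real.exp (-μ) * μ ^ m / (m.factorial : ℝ)) := by
    apply Finset.sum_congr rfl
    intro m hm
    rw [min_eq_left (Nat.cast_le.mpr (le_of_lt (Finset.mem_range.mp hm)))]
  unfold truncMean
  rw [← h, h2, h3]

lemma iff_helper (e b a d c : ℝ) (he : 0 < e) (h : a - b = e * (c - d)) :
    a > b ↔ c > d := by
  constructor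
  · intro h'
    have h1 : 0 < e * (c - d) := by linarith
    have h2 := (mul_pos_iff_of_pos_left he).mp h1
    linarith
  · intro h'
    have := mul_pos he (sub_pos.mpr h')
    linarith

/-- **Steps 1–4 of Appendix C.2.** For positive integers `n, k` with `n + k = 6` and `μ > 0`,
the probabilistic form of Condition M,
`n P(M ≥ k) + E[min(M,k)] > (2μ² + nμ) P(M = k−1) + μ P(M < k)`,
holds if and only if its factorial (finite-sum) form holds:
`6 e^μ > ∑_{j=0}^{k−2} (6 − j + μ) μ^j/j! + ((n+1) + (n+1)μ + 2μ²) μ^{k−1}/(k−1)!`. -/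
theorem conditionM_probabilistic_iff_factorial
    (n k : ℕ) (hn : 0 < n) (hk : 0 < k) (hnk : n + k = 6) (μ : ℝ) (hμ : 0 < μ) :
    ((n : ℝ) * poissonTail k μ + truncMean k μ
        > (2 * μ ^ 2 + (n : ℝ) * μ) * (Real.exp (-μ) * μ ^ (k - 1) / ((k - 1).factorial : ℝ))
          + μ * ∑ j ∈ Finset.range k, Real.exp (-μ) * μ ^ j / (j.factorial : ℝ))
      ↔ 6 * Real.exp μ
          > (∑ j ∈ Finset.range (k - 1), (6 - (j : ℝ) + μ) * (μ ^ j / (j.factorial : ℝ)))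
            + (((n : ℝ) + 1) + ((n : ℝ) + 1) * μ + 2 * μ ^ 2)
                * (μ ^ (k - 1) / ((k - 1).factorial : ℝ)) := by
  have hk5 : k ≤ 5 := by omega
  have hne := Real.exp_ne_zero μ
  have hn' : n = 6 - k := by omega
  subst hn'
  interval_cases k <;>
  · rw [trunc_eq _ _ hμ, tail_eq]
    apply iff_helper (Real.exp (-μ)) _ _ _ _ (Real.exp_pos _)
    simp only [Finset.sum_range_succ, Finset.sum_range_zero, Nat.factorial]
    rw [Real.exp_neg]
    norm_num
    field_simp
    ring
end

section
/- Fix p_I > 0, T > 0, C ∈ ℝ, and λ > 0, and set Δg = g(1;λT) − g(0;λT). If λ·(4T − 2T·Δg) < 5·Δg + g(1;λT), then Δπ(5;λ,T) < 0 and hence n*(λ,T) ≤ 5, i.e. the incumbent departs with a partial load (n* < 6). -/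
open Real

/-- Optimal departure threshold: `n*(λ,T) = min{m ∈ {1,…,5} : Δπ(m;λ,T) ≤ 0}`, with the
convention `n* = 6` if `Δπ(m;λ,T) > 0` for all `m ∈ {1,…,5}`. -/
noncomputable def nStar (p_I C lam T : ℝ) : ℕ :=
  sInf ({m : ℕ | m ∈ Finset.Icc 1 5 ∧ dProfit p_I C lam T m ≤ 0} ∪ {6})

/- Since `g(0;μ) = 0`, the hypothesis reads `λ(4T − 2Tg) < 6g` with `g = g(1;λT)`, and clearing the
positive denominators of `π(6) − π(5)` shows that this is exactly the condition `Δπ(5) < 0`. -/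

@[simp]
theorem truncMean_zero (μ : ℝ) : truncMean 0 μ = 0 := by
  simp [truncMean]

theorem dProfit_five_eq (p_I C : ℝ) {lam T : ℝ} (hlam : lam ≠ 0) (h5 : 5 + 2 * lam * T ≠ 0)
    (h6 : 6 + 2 * lam * T ≠ 0) :
    dProfit p_I C lam T 5 =
      p_I * lam * (lam * (4 * T - 2 * T * truncMean 1 (lam * T)) - 6 * truncMean 1 (lam * T)) /
        (2 * (5 + 2 * lam * T) * (6 + 2 * lam * T)) := by
  have hB5 : (5 : ℝ) / lam + 2 * T = (5 + 2 * lam * T) / lam := by field_simp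
  have hB6 : (6 : ℝ) / lam + 2 * T = (6 + 2 * lam * T) / lam := by field_simp
  simp only [dProfit, profit, Nat.reduceAdd, Nat.reduceSub, truncMean_zero, Nat.cast_ofNat,
    hB5, hB6]
  field_simp
  ring

theorem dProfit_five_neg_iff {p_I C lam T : ℝ} (hp : 0 < p_I) (hlam : 0 < lam) (hT : 0 ≤ T) :
    dProfit p_I C lam T 5 < 0 ↔
      lam * (4 * T - 2 * T * truncMean 1 (lam * T)) < 6 * truncMean 1 (lam * T) := by
  rw [dProfit_five_eq p_I C hlam.ne' (by positivity) (by positivity),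
    div_lt_iff₀ (by positivity), zero_mul, ← mul_zero (p_I * lam),
    mul_lt_mul_iff_right₀ (by positivity), sub_neg]

theorem nStar_le_of_dProfit_nonpos {p_I C lam T : ℝ} {m : ℕ} (hm : m ∈ Finset.Icc 1 5)
    (h : dProfit p_I C lam T m ≤ 0) : nStar p_I C lam T ≤ m :=
  Nat.sInf_le (Set.mem_union_left _ ⟨hm, h⟩)

/-- **Corollary 1 (entry-induced reduction in demand leads to partial departure).**
With `Δg = g(1;λT) − g(0;λT)`, if `λ (4T − 2T Δg) < 5 Δg + g(1;λT)` (i.e. `λ < λ₅†(T)`),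
then `Δπ(5;λ,T) < 0` and hence `n*(λ,T) ≤ 5`: the incumbent departs with a partial load. -/
theorem partial_departure_under_entry
    (p_I C lam T : ℝ) (hp : 0 < p_I) (hlam : 0 < lam) (hT : 0 < T)
    (Δg : ℝ) (hΔg : Δg = truncMean 1 (lam * T) - truncMean 0 (lam * T))
    (h : lam * (4 * T - 2 * T * Δg) < 5 * Δg + truncMean 1 (lam * T)) :
    dProfit p_I C lam T 5 < 0 ∧ nStar p_I C lam T ≤ 5 := by
  rw [truncMean_zero, sub_zero] at hΔg
  subst hΔg
  have hd : dProfit p_I C lam T 5 < 0 := (dProfit_five_neg_iff hp hlam hT.le).2 (by linarith)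
  exact ⟨hd, nStar_le_of_dProfit_nonpos (by decide) hd.le⟩
end
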